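/- arXiv:1701.05025 — 4 statements merged into one kernel-verified Lean document; each statement's English description precedes it below -/
import Mathlib

section
/- Let V and W be finite-dimensional real inner product spaces with dim W ≤ dim V − 2, and let β : V × V → W be a symmetric bilinear map. If β ⌀ β = μ · ⟨·,·⟩ ⌀ ⟨·,·⟩ for some real number μ ≠ 0, then μ > 0 and there exist a unit vector ξ ∈ W and a linear subspace V₁ ⊆ V with dim V₁ ≥ dim V − dim W + 1 such that β(x,y) = √μ · ⟨x,y⟩ ξ for all x ∈ V₁ and all y ∈ V. -/
/-!
Put `T(x, y) = (β(x, y), ⟪x, y⟫) ∈ W × ℝ`. The Gauss equation `β ⌀ β = μ ⟨·,·⟩ ⌀ ⟨·,·⟩` says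
that `T` is flat for the form `⟪p, q⟫ - μ p₂ q₂`. By Moore's lemma, if `x₀` has
`T(x₀, ·)` of maximal rank, then `T(ker T(x₀, ·), V)` is isotropic; since
`dim (W × ℝ) < dim V` this kernel contains a unit vector `ν`, and isotropy of `T(ν, ν)` reads
`‖β(ν, ν)‖² = μ`, whence `μ > 0`. The Gauss equation then gives
`⟪β(x, y), β(ν, ν)⟫ = μ ⟪x, y⟫`, so with `ξ = β(ν, ν) / √μ` the map
`β - √μ ⟨·,·⟩ ξ` is flat for the inner product of `W` and takes values in `ξ^⊥`. Moore's lemma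
once more: on the kernel `V₁` of a maximal-rank partial map it vanishes, and
`dim V₁ ≥ dim V - dim ξ^⊥`.
-/

open scoped RealInnerProductSpace
open Module

noncomputable section

variable {V W : Type*}
  [NormedAddCommGroup V] [InnerProductSpace ℝ V] [FiniteDimensional ℝ V]
  [NormedAddCommGroup W] [InnerProductSpace ℝ W] [FiniteDimensional ℝ W]

/-- Kulkarni–Nomizu product of two `W`-valued symmetric bilinear maps, as a `(0,4)`-tensor. -/
def kn (β γ : V → V → W) (x₁ x₂ x₃ x₄ : V) : ℝ :=
  ⟪β x₁ x₃, γ x₂ x₄⟫ - ⟪β x₁ x₄, γ x₂ x₃⟫ + ⟪β x₂ x₄, γ x₁ x₃⟫ - ⟪β x₂ x₃, γ x₁ x₄⟫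

/-- Kulkarni–Nomizu product `⟨·,·⟩ ⌀ ⟨·,·⟩` of the inner product with itself. -/
def knG (x₁ x₂ x₃ x₄ : V) : ℝ :=
  2 * (⟪x₁, x₃⟫ * ⟪x₂, x₄⟫) - 2 * (⟪x₁, x₄⟫ * ⟪x₂, x₃⟫)

/-- `R(β) = (1/2) β ⌀ β`. -/
def Rt (β : V → V → W) (x₁ x₂ x₃ x₄ : V) : ℝ := (1 / 2) * kn β β x₁ x₂ x₃ x₄

/-- `Ric(β)(x,y) = trace of z ↦ R(β)(z,x,z,y)`. -/
def ric (β : V → V → W) (x y : V) : ℝ :=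
  ∑ i, Rt β (stdOrthonormalBasis ℝ V i) x (stdOrthonormalBasis ℝ V i) y

/-- `scal(β) = trace Ric(β)`. -/
def scal (β : V → V → W) : ℝ :=
  ∑ i, ric β (stdOrthonormalBasis ℝ V i) (stdOrthonormalBasis ℝ V i)

/-- `‖β‖²`, the squared Euclidean norm of a bilinear map. -/
def bnormSq (β : V → V → W) : ℝ :=
  ∑ i, ∑ j, ‖β (stdOrthonormalBasis ℝ V i) (stdOrthonormalBasis ℝ V j)‖ ^ 2

/-- `trace β = Σ_i β(e_i, e_i)`. -/
def btrace (β : V → V → W) : W :=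
  ∑ i, β (stdOrthonormalBasis ℝ V i) (stdOrthonormalBasis ℝ V i)

/-- Squared Euclidean norm of a `(0,4)`-tensor. -/
def tnormSq (T : V → V → V → V → ℝ) : ℝ :=
  ∑ i, ∑ j, ∑ l, ∑ m,
    (T (stdOrthonormalBasis ℝ V i) (stdOrthonormalBasis ℝ V j)
       (stdOrthonormalBasis ℝ V l) (stdOrthonormalBasis ℝ V m)) ^ 2

/-- Index of a selfadjoint endomorphism: the maximal dimension of a subspace on which
`x ↦ ⟪T x, x⟫` is negative definite (= number of negative eigenvalues with multiplicity). -/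
def negIdx (T : V →ₗ[ℝ] V) : ℕ :=
  sSup {d | ∃ U : Submodule ℝ V, finrank ℝ U = d ∧ ∀ x ∈ U, x ≠ 0 → ⟪T x, x⟫ < 0}

/-- Number of positive eigenvalues (with multiplicity) of a selfadjoint endomorphism. -/
def posIdx (T : V →ₗ[ℝ] V) : ℕ :=
  sSup {d | ∃ U : Submodule ℝ V, finrank ℝ U = d ∧ ∀ x ∈ U, x ≠ 0 → 0 < ⟪T x, x⟫}

/-- Schouten tensor `L(β)`. -/
def schouten (β : V → V → W) (x y : V) : ℝ :=
  (1 / ((finrank ℝ V : ℝ) - 2)) *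
    (ric β x y - scal β / (2 * ((finrank ℝ V : ℝ) - 1)) * ⟪x, y⟫)

/-- `L ⌀ ⟨·,·⟩` for a real-valued bilinear form `L`. -/
def knLG (L : V → V → ℝ) (x₁ x₂ x₃ x₄ : V) : ℝ :=
  L x₁ x₃ * ⟪x₂, x₄⟫ + L x₂ x₄ * ⟪x₁, x₃⟫ - L x₁ x₄ * ⟪x₂, x₃⟫ - L x₂ x₃ * ⟪x₁, x₄⟫

/-- Weyl tensor `W(β) = R(β) − L(β) ⌀ ⟨·,·⟩`. -/
def Wt (β : V → V → W) (x₁ x₂ x₃ x₄ : V) : ℝ :=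
  Rt β x₁ x₂ x₃ x₄ - knLG (schouten β) x₁ x₂ x₃ x₄

open scoped Topology
open LinearMap Filter

section RankPerturbation

variable {E F : Type*} [AddCommGroup E] [Module ℝ E]
  [NormedAddCommGroup F] [NormedSpace ℝ F] [FiniteDimensional ℝ F]

theorem LinearMap.apply_mem_range_of_forall_finrank_range_le (A B : E →ₗ[ℝ] F)
    (hmax : ∀ t : ℝ, finrank ℝ (range (A + t • B)) ≤ finrank ℝ (range A))
    {ν : E} (hν : A ν = 0) : B ν ∈ range A := by
  by_contra hout
  set r := finrank ℝ (range A)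
  let b := Module.finBasis ℝ (range A)
  choose c hc using fun i => (b i).2
  set f : Fin (r + 1) → F := Fin.snoc (fun i => (b i : F)) (B ν)
  set d : Fin (r + 1) → F := Fin.snoc (fun i => B (c i)) 0
  have hf : LinearIndependent ℝ f := by
    refine linearIndependent_finSnoc.2
      ⟨b.linearIndependent.map' _ (Submodule.ker_subtype _), fun hspan => hout ?_⟩
    exact Submodule.span_le.2 (by rintro _ ⟨i, rfl⟩; exact (b i).2) hspan
  -- linear independence is an open condition, so it survives a small perturbation `t ≠ 0`
  have hlim : Tendsto (fun t : ℝ => f + t • d) (𝓝[≠] 0) (𝓝 f) := by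
    have hcont : Continuous (fun t : ℝ => f + t • d) := by fun_prop
    simpa using (hcont.tendsto 0).mono_left nhdsWithin_le_nhds
  obtain ⟨t, hli, ht⟩ := ((hlim.eventually hf.eventually).and self_mem_nhdsWithin).exists
  have hmem : ∀ i, (f + t • d) i ∈ range (A + t • B) := by
    intro i
    induction i using Fin.lastCases with
    | last =>
      simpa [f, d, hν, smul_smul, inv_mul_cancel₀ ht] using
        Submodule.smul_mem _ t⁻¹ (mem_range_self (A + t • B) ν)
    | cast i => simpa [f, d, hc] using mem_range_self (A + t • B) (c i)
  have hli' : LinearIndependent ℝ (fun i => (⟨_, hmem i⟩ : range (A + t • B))) :=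
    .of_comp (range _).subtype hli
  have hcard := hli'.fintype_card_le_finrank
  have := hmax t
  simp only [Fintype.card_fin] at hcard
  omega

end RankPerturbation

section Flat

variable {E F : Type*} [AddCommGroup E] [Module ℝ E] [AddCommGroup F] [Module ℝ F]

def IsFlat (b : F →ₗ[ℝ] F →ₗ[ℝ] ℝ) (T : E →ₗ[ℝ] E →ₗ[ℝ] F) : Prop :=
  ∀ x y z w, b (T x z) (T y w) = b (T x w) (T y z)

theorem IsFlat.apply_apply_eq_zero_of_apply_eq_zero {b : F →ₗ[ℝ] F →ₗ[ℝ] ℝ}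
    {T : E →ₗ[ℝ] E →ₗ[ℝ] F} (hT : IsFlat b T) (hsym : ∀ x y, T x y = T y x)
    {x₀ ν : E} (hν : T x₀ ν = 0) (z u : E) : b (T ν z) (T x₀ u) = 0 := by
  have hνx₀ : T ν x₀ = 0 := (hsym ν x₀).trans hν
  have h₁ := hT ν x₀ z u
  have h₂ := hT ν x₀ z x₀
  have h₃ := hT ν u z u
  have h₄ := hT ν (x₀ + u) z (x₀ + u)
  simp only [map_add, LinearMap.add_apply, hνx₀, hsym u x₀, map_zero, LinearMap.zero_apply,
    zero_add] at h₂ h₄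
  linarith

end Flat

section Moore

variable {E F : Type*} [AddCommGroup E] [Module ℝ E]
  [NormedAddCommGroup F] [NormedSpace ℝ F] [FiniteDimensional ℝ F]

theorem exists_forall_finrank_range_le (T : E →ₗ[ℝ] E →ₗ[ℝ] F) :
    ∃ x₀, ∀ x, finrank ℝ (range (T x)) ≤ finrank ℝ (range (T x₀)) := by
  have hbdd : BddAbove (Set.range fun x => finrank ℝ (range (T x))) :=
    ⟨finrank ℝ F, by rintro _ ⟨x, rfl⟩; exact Submodule.finrank_le _⟩
  obtain ⟨x₀, hx₀⟩ := Nat.sSup_mem (Set.range_nonempty _) hbdd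
  exact ⟨x₀, fun x => (le_csSup hbdd ⟨x, rfl⟩).trans_eq hx₀.symm⟩

/-- Moore's lemma on flat bilinear maps. -/
theorem IsFlat.exists_isotropic_ker {b : F →ₗ[ℝ] F →ₗ[ℝ] ℝ} {T : E →ₗ[ℝ] E →ₗ[ℝ] F}
    (hT : IsFlat b T) (hsym : ∀ x y, T x y = T y x) :
    ∃ x₀, ∀ ν ∈ ker (T x₀), ∀ ν' ∈ ker (T x₀), ∀ z z', b (T ν z) (T ν' z') = 0 := by
  obtain ⟨x₀, hx₀⟩ := exists_forall_finrank_range_le T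
  refine ⟨x₀, fun ν hν ν' hν' z z' => ?_⟩
  obtain ⟨u, hu⟩ : T ν' z' ∈ range (T x₀) := by
    rw [hsym]
    refine (T x₀).apply_mem_range_of_forall_finrank_range_le (T z') (fun t => ?_) hν'
    have := hx₀ (x₀ + t • z')
    rwa [map_add, map_smul] at this
  rw [← hu]
  exact hT.apply_apply_eq_zero_of_apply_eq_zero hsym hν z u

end Moore

section ConstantCurvature

variable {E F : Type*} [NormedAddCommGroup E] [InnerProductSpace ℝ E]
  [NormedAddCommGroup F] [InnerProductSpace ℝ F]

/-- The Gauss equation `β ⌀ β = μ ⟨·,·⟩ ⌀ ⟨·,·⟩`, written out and divided by 2. -/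
def HasConstCurvature (β : E →ₗ[ℝ] E →ₗ[ℝ] F) (μ : ℝ) : Prop :=
  ∀ x y z w, ⟪β x z, β y w⟫ - ⟪β x w, β y z⟫ = μ * (⟪x, z⟫ * ⟪y, w⟫ - ⟪x, w⟫ * ⟪y, z⟫)

theorem hasConstCurvature_of_kn (β : E →ₗ[ℝ] E →ₗ[ℝ] F) (μ : ℝ)
    (hkn : ∀ x₁ x₂ x₃ x₄ : E,
      kn (fun x y => β x y) (fun x y => β x y) x₁ x₂ x₃ x₄ = μ * knG x₁ x₂ x₃ x₄) :
    HasConstCurvature β μ := fun x y z w => by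
  have h := hkn x y z w
  simp only [kn, knG] at h
  rw [real_inner_comm (β x z) (β y w), real_inner_comm (β x w) (β y z)] at h
  linarith

def augment (β : E →ₗ[ℝ] E →ₗ[ℝ] F) : E →ₗ[ℝ] E →ₗ[ℝ] F × ℝ :=
  β.compr₂ (inl ℝ F ℝ) + (innerₗ E).compr₂ (inr ℝ F ℝ)

@[simp] theorem augment_apply (β : E →ₗ[ℝ] E →ₗ[ℝ] F) (x y : E) :
    augment β x y = (β x y, ⟪x, y⟫) := by
  simp [augment]

def twistedInner (μ : ℝ) : (F × ℝ) →ₗ[ℝ] (F × ℝ) →ₗ[ℝ] ℝ :=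
  (innerₗ F).compl₁₂ (fst ℝ F ℝ) (fst ℝ F ℝ) - μ • (mul ℝ ℝ).compl₁₂ (snd ℝ F ℝ) (snd ℝ F ℝ)

@[simp] theorem twistedInner_apply (μ : ℝ) (p q : F × ℝ) :
    twistedInner μ p q = ⟪p.1, q.1⟫ - μ * (p.2 * q.2) := rfl

variable {β : E →ₗ[ℝ] E →ₗ[ℝ] F} {μ : ℝ}

theorem HasConstCurvature.isFlat_augment (hG : HasConstCurvature β μ) :
    IsFlat (twistedInner μ) (augment β) := by
  intro x y z w
  simp only [augment_apply, twistedInner_apply]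
  linear_combination hG x y z w

theorem HasConstCurvature.exists_norm_eq_one_inner_apply_eq [FiniteDimensional ℝ E]
    [FiniteDimensional ℝ F] (hG : HasConstCurvature β μ) (hsym : ∀ x y, β x y = β y x)
    (hdim : finrank ℝ F + 2 ≤ finrank ℝ E) :
    ∃ ν : E, ‖ν‖ = 1 ∧ ∀ z z', ⟪β ν z, β ν z'⟫ = μ * (⟪ν, z⟫ * ⟪ν, z'⟫) := by
  have hsymT : ∀ x y, augment β x y = augment β y x := fun x y => by
    simp [hsym x y, real_inner_comm x y]
  obtain ⟨x₀, hiso⟩ := hG.isFlat_augment.exists_isotropic_ker hsymT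
  have hker : ker (augment β x₀) ≠ ⊥ := by
    have hrange := Submodule.finrank_le (range (augment β x₀))
    have := (augment β x₀).finrank_range_add_finrank_ker
    rw [finrank_prod, finrank_self] at hrange
    rw [← Submodule.one_le_finrank_iff]
    omega
  obtain ⟨ν₀, hν₀, hν₀0⟩ := Submodule.exists_mem_ne_zero_of_ne_bot hker
  have hν := Submodule.smul_mem _ ‖ν₀‖⁻¹ hν₀
  refine ⟨‖ν₀‖⁻¹ • ν₀, ?_, fun z z' => ?_⟩
  · rw [norm_smul, norm_inv, norm_norm, inv_mul_cancel₀ (norm_ne_zero_iff.2 hν₀0)]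
  have := hiso _ hν _ hν z z'
  simp only [augment_apply, twistedInner_apply] at this
  linarith

theorem HasConstCurvature.exists_norm_eq_one_inner_apply_eq_sqrt (hG : HasConstCurvature β μ)
    (hsym : ∀ x y, β x y = β y x) (hμ : 0 < μ) {ν : E} (hν : ‖ν‖ = 1)
    (hiso : ∀ z z', ⟪β ν z, β ν z'⟫ = μ * (⟪ν, z⟫ * ⟪ν, z'⟫)) :
    ∃ ξ : F, ‖ξ‖ = 1 ∧ ∀ v w, ⟪β v w, ξ⟫ = √μ * ⟪v, w⟫ := by
  have hνν : ⟪ν, ν⟫ = (1 : ℝ) := by simp [hν]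
  have hη : ∀ v w, ⟪β v w, β ν ν⟫ = μ * ⟪v, w⟫ := fun v w => by
    have := hG v ν w ν
    rw [hsym v ν, hiso, hνν, real_inner_comm v ν] at this
    linarith
  have hsqrt : 0 < √μ := Real.sqrt_pos.2 hμ
  refine ⟨(√μ)⁻¹ • β ν ν, ?_, fun v w => ?_⟩
  · have hnorm : ‖β ν ν‖ = √μ := by
      rw [← Real.sqrt_sq (norm_nonneg _), ← real_inner_self_eq_norm_sq, hη, hνν, mul_one]
    rw [norm_smul, norm_inv, Real.norm_of_nonneg hsqrt.le, hnorm, inv_mul_cancel₀ hsqrt.ne']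
  · rw [real_inner_smul_right, hη, ← mul_assoc, inv_mul_eq_div, Real.div_sqrt]

theorem sub_smul_innerₗ_compr₂_apply (β : E →ₗ[ℝ] E →ₗ[ℝ] F) (c : ℝ) (ξ : F) (x y : E) :
    (β - c • (innerₗ E).compr₂ (toSpanSingleton ℝ F ξ)) x y = β x y - (c * ⟪x, y⟫) • ξ := by
  simp [smul_smul]

theorem HasConstCurvature.isFlat_sub (hG : HasConstCurvature β μ) (hμ : 0 ≤ μ) {ξ : F}
    (hξ : ‖ξ‖ = 1) (hβξ : ∀ v w, ⟪β v w, ξ⟫ = √μ * ⟪v, w⟫) :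
    IsFlat (innerₗ F) (β - √μ • (innerₗ E).compr₂ (toSpanSingleton ℝ F ξ)) := by
  have hξξ : ⟪ξ, ξ⟫ = (1 : ℝ) := by simp [hξ]
  have hinner : ∀ x z y w, ⟪β x z - (√μ * ⟪x, z⟫) • ξ, β y w - (√μ * ⟪y, w⟫) • ξ⟫ =
      ⟪β x z, β y w⟫ - μ * (⟪x, z⟫ * ⟪y, w⟫) := fun x z y w => by
    simp only [inner_sub_left, inner_sub_right, real_inner_smul_left, real_inner_smul_right,
      hβξ, real_inner_comm _ ξ, hξξ]
    linear_combination (-⟪x, z⟫ * ⟪y, w⟫) * Real.mul_self_sqrt hμ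
  intro x y z w
  simp only [innerₗ_apply_apply, sub_smul_innerₗ_compr₂_apply, hinner]
  linear_combination hG x y z w

theorem HasConstCurvature.exists_submodule_apply_eq [FiniteDimensional ℝ E]
    [FiniteDimensional ℝ F] (hG : HasConstCurvature β μ) (hsym : ∀ x y, β x y = β y x)
    (hμ : 0 ≤ μ) {ξ : F} (hξ : ‖ξ‖ = 1) (hβξ : ∀ v w, ⟪β v w, ξ⟫ = √μ * ⟪v, w⟫) :
    ∃ V₁ : Submodule ℝ E, finrank ℝ E + 1 ≤ finrank ℝ V₁ + finrank ℝ F ∧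
      ∀ x ∈ V₁, ∀ y, β x y = (√μ * ⟪x, y⟫) • ξ := by
  set S := β - √μ • (innerₗ E).compr₂ (toSpanSingleton ℝ F ξ)
  have hS : ∀ x y, S x y = β x y - (√μ * ⟪x, y⟫) • ξ := sub_smul_innerₗ_compr₂_apply β _ ξ
  have hsymS : ∀ x y, S x y = S y x := fun x y => by rw [hS, hS, hsym, real_inner_comm]
  obtain ⟨x₁, hiso⟩ := (hG.isFlat_sub hμ hξ hβξ).exists_isotropic_ker hsymS
  refine ⟨ker (S x₁), ?_, fun x hx y => ?_⟩
  · have hrange : range (S x₁) ≤ (ℝ ∙ ξ)ᗮ := by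
      rintro _ ⟨y, rfl⟩
      rw [Submodule.mem_orthogonal_singleton_iff_inner_right, hS, inner_sub_right,
        real_inner_comm, hβξ, real_inner_smul_right, real_inner_self_eq_norm_sq, hξ]
      ring
    have h₁ := Submodule.finrank_mono hrange
    have h₂ := (ℝ ∙ ξ).finrank_add_finrank_orthogonal
    have h₃ := (S x₁).finrank_range_add_finrank_ker
    rw [finrank_span_singleton (norm_ne_zero_iff.1 (hξ.trans_ne one_ne_zero))] at h₂
    omega
  · have h := hiso x hx x hx y y
    rw [innerₗ_apply_apply, inner_self_eq_zero, hS, sub_eq_zero] at h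
    exact h

end ConstantCurvature

/-- Lemma 2.1 of Vlachos. If a symmetric bilinear map `β : V × V → W`, with
`dim W ≤ dim V − 2`, satisfies `β ⌀ β = μ ⟨·,·⟩ ⌀ ⟨·,·⟩` for some `μ ≠ 0`, then `μ > 0` and
there are a unit vector `ξ ∈ W` and a subspace `V₁ ⊆ V` with
`dim V₁ ≥ dim V − dim W + 1` such that `β(x,y) = √μ ⟨x,y⟩ ξ` for all `x ∈ V₁`, `y ∈ V`. -/
theorem stmt0 (β : V →ₗ[ℝ] V →ₗ[ℝ] W) (hβ : ∀ x y, β x y = β y x)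
    (hdim : finrank ℝ W + 2 ≤ finrank ℝ V) (μ : ℝ) (hμ : μ ≠ 0)
    (hkn : ∀ x₁ x₂ x₃ x₄ : V,
      kn (fun x y => β x y) (fun x y => β x y) x₁ x₂ x₃ x₄ = μ * knG x₁ x₂ x₃ x₄) :
    0 < μ ∧ ∃ ξ : W, ‖ξ‖ = 1 ∧ ∃ V₁ : Submodule ℝ V,
      finrank ℝ V + 1 ≤ finrank ℝ (V₁ : Submodule ℝ V) + finrank ℝ W ∧
      ∀ x ∈ V₁, ∀ y : V, β x y = (Real.sqrt μ * ⟪x, y⟫) • ξ := by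
  have hG := hasConstCurvature_of_kn β μ hkn
  obtain ⟨ν, hν, hiso⟩ := hG.exists_norm_eq_one_inner_apply_eq hβ hdim
  have hpos : 0 < μ := by
    refine lt_of_le_of_ne ?_ hμ.symm
    have h := hiso ν ν
    rw [real_inner_self_eq_norm_sq, real_inner_self_eq_norm_sq, hν] at h
    nlinarith [sq_nonneg ‖β ν ν‖]
  obtain ⟨ξ, hξ, hβξ⟩ := hG.exists_norm_eq_one_inner_apply_eq_sqrt hβ hpos hν hiso
  exact ⟨hpos, ξ, hξ, hG.exists_submodule_apply_eq hβ hpos.le hξ hβξ⟩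
end
end

section
/- Let V and W be finite-dimensional real inner product spaces with dim V = n, and let β : V × V → W be a symmetric bilinear map with W(β) = 0. Equip W̃ = W ⊕ ℝ² with the Lorentzian inner product ⟨⟨(ξ,(s₁,s₂)), (η,(t₁,t₂))⟩⟩ = ⟨ξ,η⟩ + s₁t₂ + s₂t₁, and define the symmetric bilinear map β̃ : V × V → W̃ by β̃(x,y) = (β(x,y), ⟨x,y⟩, −L(β)(x,y)). Then β̃ is flat with respect to ⟨⟨·,·⟩⟩, i.e. ⟨⟨β̃(x₁,x₃), β̃(x₂,x₄)⟩⟩ − ⟨⟨β̃(x₁,x₄), β̃(x₂,x₃)⟩⟩ = 0 for all x₁,x₂,x₃,x₄ ∈ V. -/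
open scoped RealInnerProductSpace
open Module

noncomputable section

variable {V W : Type*}
  [NormedAddCommGroup V] [InnerProductSpace ℝ V] [FiniteDimensional ℝ V]
  [NormedAddCommGroup W] [InnerProductSpace ℝ W] [FiniteDimensional ℝ W]

/-- The Lorentzian inner product on `W̃ = W ⊕ ℝ²`:
`⟨⟨(ξ,(s₁,s₂)), (η,(t₁,t₂))⟩⟩ = ⟨ξ,η⟩ + s₁t₂ + s₂t₁`. -/
def lorentzProd (v w : W × ℝ × ℝ) : ℝ :=
  ⟪v.1, w.1⟫ + v.2.1 * w.2.2 + v.2.2 * w.2.1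

omit [NormedAddCommGroup V] [InnerProductSpace ℝ V] [FiniteDimensional ℝ V]
  [FiniteDimensional ℝ W] in
theorem Rt_eq_inner_sub_inner (β : V → V → W) (x₁ x₂ x₃ x₄ : V) :
    Rt β x₁ x₂ x₃ x₄ = ⟪β x₁ x₃, β x₂ x₄⟫ - ⟪β x₁ x₄, β x₂ x₃⟫ := by
  rw [Rt, kn, real_inner_comm (β x₂ x₄), real_inner_comm (β x₂ x₃)]
  ring

omit [FiniteDimensional ℝ V] [FiniteDimensional ℝ W] in
theorem lorentzProd_sub_lorentzProd_eq_Rt_sub_knLG (β : V → V → W) (L : V → V → ℝ)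
    (x₁ x₂ x₃ x₄ : V) :
    lorentzProd (β x₁ x₃, ⟪x₁, x₃⟫, -L x₁ x₃) (β x₂ x₄, ⟪x₂, x₄⟫, -L x₂ x₄) -
        lorentzProd (β x₁ x₄, ⟪x₁, x₄⟫, -L x₁ x₄) (β x₂ x₃, ⟪x₂, x₃⟫, -L x₂ x₃) =
      Rt β x₁ x₂ x₃ x₄ - knLG L x₁ x₂ x₃ x₄ := by
  rw [Rt_eq_inner_sub_inner, lorentzProd, lorentzProd, knLG]
  ring

theorem stmt5_general (β : V →ₗ[ℝ] V →ₗ[ℝ] W)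
    (hW : ∀ x₁ x₂ x₃ x₄ : V, Wt (fun x y => β x y) x₁ x₂ x₃ x₄ = 0) :
    ∀ x₁ x₂ x₃ x₄ : V,
      lorentzProd (β x₁ x₃, ⟪x₁, x₃⟫, -schouten (fun x y => β x y) x₁ x₃)
          (β x₂ x₄, ⟪x₂, x₄⟫, -schouten (fun x y => β x y) x₂ x₄) -
        lorentzProd (β x₁ x₄, ⟪x₁, x₄⟫, -schouten (fun x y => β x y) x₁ x₄)
          (β x₂ x₃, ⟪x₂, x₃⟫, -schouten (fun x y => β x y) x₂ x₃) = 0 := by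
  intro x₁ x₂ x₃ x₄
  exact (lorentzProd_sub_lorentzProd_eq_Rt_sub_knLG _ _ x₁ x₂ x₃ x₄).trans (hW x₁ x₂ x₃ x₄)

/-- If `W(β) = 0`, then the symmetric bilinear map
`β̃(x,y) = (β(x,y), ⟨x,y⟩, −L(β)(x,y))` with values in `W̃ = W ⊕ ℝ²` is flat with respect to
the Lorentzian inner product `⟨⟨·,·⟩⟩`. -/
theorem stmt5 (β : V →ₗ[ℝ] V →ₗ[ℝ] W) (hβ : ∀ x y, β x y = β y x)
    (hW : ∀ x₁ x₂ x₃ x₄ : V, Wt (fun x y => β x y) x₁ x₂ x₃ x₄ = 0) :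
    ∀ x₁ x₂ x₃ x₄ : V,
      lorentzProd (β x₁ x₃, ⟪x₁, x₃⟫, -schouten (fun x y => β x y) x₁ x₃)
          (β x₂ x₄, ⟪x₂, x₄⟫, -schouten (fun x y => β x y) x₂ x₄) -
        lorentzProd (β x₁ x₄, ⟪x₁, x₄⟫, -schouten (fun x y => β x y) x₁ x₄)
          (β x₂ x₃, ⟪x₂, x₃⟫, -schouten (fun x y => β x y) x₂ x₃) = 0 :=
  stmt5_general β hW
end
end

section
/- Let V and W be finite-dimensional real inner product spaces, λ ∈ (0,1), and β : V × V → W a nonzero symmetric bilinear map satisfying ‖β‖² ≤ λ·|trace β|². Then scal(β) ≥ ((1−λ)/λ)·‖β‖² > 0; in particular scal(β) > 0. -/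
open scoped RealInnerProductSpace
open Module

noncomputable section

variable {V W : Type*}
  [NormedAddCommGroup V] [InnerProductSpace ℝ V] [FiniteDimensional ℝ V]
  [NormedAddCommGroup W] [InnerProductSpace ℝ W] [FiniteDimensional ℝ W]

/-!
For a symmetric `β`, contracting the Gauss-type curvature `R(β)` twice gives
`scal(β) = |trace β|² - ‖β‖²`. The pinching `‖β‖² ≤ λ |trace β|²` therefore yields
`scal(β) ≥ (1/λ - 1) ‖β‖²`, which is positive because `‖β‖² > 0` for `β ≠ 0`.
-/

section

omit [FiniteDimensional ℝ W]

variable {β : V → V → W}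

omit [NormedAddCommGroup V] [InnerProductSpace ℝ V] [FiniteDimensional ℝ V] in
lemma Rt_eq_of_symm (hβ : ∀ x y, β x y = β y x) (x y z : V) :
    Rt β z x z y = ⟪β z z, β x y⟫ - ⟪β z x, β z y⟫ := by
  simp only [Rt, kn, hβ x z, real_inner_comm (β z z), real_inner_comm (β z x)]
  ring

lemma ric_eq_of_symm (hβ : ∀ x y, β x y = β y x) (x y : V) :
    ric β x y = ⟪btrace β, β x y⟫ -
      ∑ i, ⟪β (stdOrthonormalBasis ℝ V i) x, β (stdOrthonormalBasis ℝ V i) y⟫ := by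
  simp only [ric, Rt_eq_of_symm hβ, Finset.sum_sub_distrib, btrace, sum_inner]

lemma scal_eq_of_symm (hβ : ∀ x y, β x y = β y x) :
    scal β = ‖btrace β‖ ^ 2 - bnormSq β := by
  simp only [scal, ric_eq_of_symm hβ, Finset.sum_sub_distrib, ← inner_sum,
    real_inner_self_eq_norm_sq]
  rw [← btrace, real_inner_self_eq_norm_sq, bnormSq, Finset.sum_comm]

lemma bnormSq_pos {b : V →ₗ[ℝ] V →ₗ[ℝ] W} (hne : b ≠ 0) :
    0 < bnormSq (fun x y => b x y) := by
  set e := stdOrthonormalBasis ℝ V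
  obtain ⟨i, j, hij⟩ : ∃ i j, b (e i) (e j) ≠ 0 := by
    by_contra! h
    exact hne (e.toBasis.ext fun i => e.toBasis.ext fun j => by simpa using h i j)
  refine Finset.sum_pos' (fun _ _ => by positivity) ⟨i, Finset.mem_univ _, ?_⟩
  exact Finset.sum_pos' (fun _ _ => by positivity) ⟨j, Finset.mem_univ _, by positivity⟩

end

/-- If `β ≠ 0` is a symmetric bilinear map with `‖β‖² ≤ λ |trace β|²` for some
`λ ∈ (0,1)`, then `scal(β) ≥ ((1−λ)/λ) ‖β‖² > 0`; in particular `scal(β) > 0`. -/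
theorem stmt7 (lam : ℝ) (hlam0 : 0 < lam) (hlam1 : lam < 1)
    (β : V →ₗ[ℝ] V →ₗ[ℝ] W) (hβ : ∀ x y, β x y = β y x) (hne : β ≠ 0)
    (hpinch : bnormSq (fun x y => β x y) ≤ lam * ‖btrace (fun x y => β x y)‖ ^ 2) :
    ((1 - lam) / lam) * bnormSq (fun x y => β x y) ≤ scal (fun x y => β x y) ∧
      0 < ((1 - lam) / lam) * bnormSq (fun x y => β x y) ∧
      0 < scal (fun x y => β x y) := by
  have hpos := bnormSq_pos hne
  have hscal := scal_eq_of_symm (β := fun x y => β x y) hβ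
  set B := bnormSq (fun x y => β x y)
  have hlower : (1 - lam) / lam * B ≤ scal (fun x y => β x y) := by
    have htrace : B / lam ≤ ‖btrace (fun x y => β x y)‖ ^ 2 := (div_le_iff₀' hlam0).mpr hpinch
    have : (1 - lam) / lam * B = B / lam - B := by field_simp
    rw [hscal, this]
    linarith
  have hgap : 0 < (1 - lam) / lam * B := mul_pos (div_pos (by linarith) hlam0) hpos
  exact ⟨hlower, hgap, hgap.trans_le hlower⟩
end
end

section
/- Let n ≥ 7 be an integer, V = ℝⁿ with its standard inner product, and W = ℝ² with orthonormal basis ξ₁, ξ₂. Fix a > 0, let A be the diagonal n×n matrix with diagonal entries (a, a, −a, −a, …, −a) (two entries equal to a and n−2 entries equal to −a), and define the symmetric bilinear map β : V × V → W by β(x,y) = ⟨Ax,y⟩ ξ₁. Then: (i) for every λ with n/(n−4)² ≤ λ < 1, one has ‖β‖² − λ·|trace β|² ≤ 0, so (‖β‖² − λ·|trace β|²)₊ = 0; (ii) Φ(β) = S¹ ∖ {ξ₂, −ξ₂}, where S¹ is the unit circle of W; (iii) ∫_{Φ(β)} |det β^♯(u)| dS_u > 0. In particular, the inequality of the form ((‖β‖²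 − λ·|trace β|²)₊)² ≥ ε·(∫_{Φ(β)} |det β^♯(u)| dS_u)^{4/n} fails for this β for every ε > 0. -/
open scoped RealInnerProductSpace
open Module

noncomputable section

variable {V W : Type*}
  [NormedAddCommGroup V] [InnerProductSpace ℝ V] [FiniteDimensional ℝ V]
  [NormedAddCommGroup W] [InnerProductSpace ℝ W] [FiniteDimensional ℝ W]

open MeasureTheory

/-- The diagonal entries `(a, a, −a, …, −a)` of the matrix `A`. -/
def dvec (n : ℕ) (a : ℝ) : Fin n → ℝ := fun i => if (i : ℕ) < 2 then a else -a

/-- The symmetric bilinear map `β(x,y) = ⟨Ax, y⟩ ξ₁` where `A = diag(a,a,−a,…,−a)`. -/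
def βex (n : ℕ) (a : ℝ) :
    EuclideanSpace ℝ (Fin n) → EuclideanSpace ℝ (Fin n) → EuclideanSpace ℝ (Fin 2) :=
  fun x y => (∑ i, dvec n a i * x i * y i) • EuclideanSpace.single (0 : Fin 2) (1 : ℝ)

/-! Since `β^♯(u) = ⟪u, ξ₁⟫ • A` with `A` diagonal, its index is `n - 2`, `2` or `0` according to
the sign of `⟪u, ξ₁⟫` (the coordinate `u 0`), so it lies in `[2, n - 2]` exactly off `±ξ₂`.
Moreover `|det β^♯(u)| = (a |⟪u, ξ₁⟫|)ⁿ` vanishes at `±ξ₂`, so the integral over `Φ(β)` is the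
integral over the whole circle of a continuous nonnegative function that is not identically zero.
On the other hand `‖β‖² = n a²` and `|trace β|² = (n - 4)² a²`, so `‖β‖² - λ |trace β|² ≤ 0`
as soon as `λ ≥ n / (n - 4)²`. -/

open Metric Matrix

section BilinearOfEndomorphism

variable {E F : Type*}
  [NormedAddCommGroup E] [InnerProductSpace ℝ E] [FiniteDimensional ℝ E]
  [NormedAddCommGroup F] [InnerProductSpace ℝ F]

lemma btrace_inner_smul (A : E →ₗ[ℝ] E) (w : F) :
    btrace (fun x y => ⟪A x, y⟫ • w) = LinearMap.trace ℝ E A • w := by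
  simp_rw [btrace, ← Finset.sum_smul, LinearMap.trace_eq_sum_inner A (stdOrthonormalBasis ℝ E),
    real_inner_comm]

lemma bnormSq_inner_smul {A : E →ₗ[ℝ] E} {c : ℝ} (hA : ∀ x, ‖A x‖ = c * ‖x‖) (w : F) :
    bnormSq (fun x y => ⟪A x, y⟫ • w) = finrank ℝ E * c ^ 2 * ‖w‖ ^ 2 := by
  set b := stdOrthonormalBasis ℝ E
  have hrow : ∀ i, ∑ j, ‖⟪A (b i), b j⟫ • w‖ ^ 2 = c ^ 2 * ‖w‖ ^ 2 := fun i => by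
    simp_rw [norm_smul, mul_pow, Real.norm_eq_abs, sq_abs, ← Finset.sum_mul,
      b.sum_sq_inner_left, hA, b.orthonormal.1 i, mul_one]
  simp [bnormSq, b, hrow, mul_assoc]

end BilinearOfEndomorphism

section VanishingOn

variable {ι : Type*}

def vanishingOn (p : ι → Prop) : Submodule ℝ (EuclideanSpace ℝ ι) :=
  LinearMap.ker (LinearMap.pi fun i : {i // p i} => EuclideanSpace.projₗ (i : ι))

lemma mem_vanishingOn {p : ι → Prop} {x : EuclideanSpace ℝ ι} :
    x ∈ vanishingOn p ↔ ∀ i, p i → x i = 0 := by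
  simp [vanishingOn, funext_iff]

lemma finrank_vanishingOn [Fintype ι] (p : ι → Prop) [DecidablePred p] :
    finrank ℝ (vanishingOn p) = Fintype.card ι - Fintype.card {i // p i} := by
  have hsurj : Function.Surjective
      (LinearMap.pi fun i : {i // p i} => EuclideanSpace.projₗ (𝕜 := ℝ) (i : ι)) := fun g =>
    ⟨WithLp.toLp 2 fun i => if h : p i then g ⟨i, h⟩ else 0, funext fun i => by simp [i.2]⟩
  have h := LinearMap.finrank_range_add_finrank_ker
    (LinearMap.pi fun i : {i // p i} => EuclideanSpace.projₗ (𝕜 := ℝ) (i : ι))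
  rw [LinearMap.range_eq_top.2 hsurj, finrank_top, finrank_fintype_fun_eq_card,
    finrank_euclideanSpace] at h
  exact Nat.eq_sub_of_add_eq' h

end VanishingOn

section Diagonal

variable {ι : Type*} [Fintype ι] [DecidableEq ι]

lemma toEuclideanLin_diagonal_apply (d : ι → ℝ) (x : EuclideanSpace ℝ ι) (i : ι) :
    toEuclideanLin (diagonal d) x i = d i * x i := by
  simp [toLpLin_apply, mulVec_diagonal]

lemma inner_toEuclideanLin_diagonal (d : ι → ℝ) (x y : EuclideanSpace ℝ ι) :
    ⟪toEuclideanLin (diagonal d) x, y⟫ = ∑ i, d i * x i * y i := by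
  simp [PiLp.inner_apply, toEuclideanLin_diagonal_apply, mul_comm]

lemma norm_toEuclideanLin_diagonal {d : ι → ℝ} {c : ℝ} (hc : 0 ≤ c) (hd : ∀ i, |d i| = c)
    (x : EuclideanSpace ℝ ι) : ‖toEuclideanLin (diagonal d) x‖ = c * ‖x‖ := by
  refine (sq_eq_sq₀ (norm_nonneg _) (by positivity)).1 ?_
  simp_rw [mul_pow, EuclideanSpace.real_norm_sq_eq, Finset.mul_sum,
    toEuclideanLin_diagonal_apply, mul_pow, ← sq_abs (d _), hd]

lemma trace_toEuclideanLin_diagonal (d : ι → ℝ) :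
    LinearMap.trace ℝ _ (toEuclideanLin (diagonal d)) = ∑ i, d i := by
  rw [toEuclideanLin, toLpLin_eq_toLin, LinearMap.trace_eq_matrix_trace ℝ (PiLp.basisFun 2 ℝ ι),
    LinearMap.toMatrix_toLin, trace_diagonal]

lemma det_toEuclideanLin_diagonal (d : ι → ℝ) :
    LinearMap.det (toEuclideanLin (diagonal d)) = ∏ i, d i := by
  rw [toEuclideanLin, LinearMap.det_toLpLin, det_diagonal]

end Diagonal

section Index

variable {E : Type*} [NormedAddCommGroup E] [InnerProductSpace ℝ E] [FiniteDimensional ℝ E]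

lemma negIdx_eq_finrank {T : E →ₗ[ℝ] E} (U P : Submodule ℝ E)
    (hU : ∀ x ∈ U, x ≠ 0 → ⟪T x, x⟫ < 0) (hP : ∀ x ∈ P, 0 ≤ ⟪T x, x⟫)
    (hdim : finrank ℝ U + finrank ℝ P = finrank ℝ E) : negIdx T = finrank ℝ U := by
  have hbound : ∀ d ∈ {d | ∃ U : Submodule ℝ E, finrank ℝ U = d ∧
      ∀ x ∈ U, x ≠ 0 → ⟪T x, x⟫ < 0}, d ≤ finrank ℝ U := by
    rintro _ ⟨U', rfl, hU'⟩
    have hdisj : Disjoint U' P := Submodule.disjoint_def.2 fun x hxU hxP => by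
      by_contra hx
      exact (hU' x hxU hx).not_ge (hP x hxP)
    have := Submodule.finrank_add_finrank_le_of_disjoint hdisj
    omega
  exact le_antisymm (csSup_le ⟨_, U, rfl, hU⟩ hbound) (le_csSup ⟨_, hbound⟩ ⟨U, rfl, hU⟩)

end Index

section DiagonalIndex

variable {ι : Type*} [Fintype ι] [DecidableEq ι]

lemma negIdx_toEuclideanLin_diagonal (d : ι → ℝ) :
    negIdx (toEuclideanLin (diagonal d)) = Fintype.card {i // d i < 0} := by
  have hcard := Fintype.card_subtype_compl (fun i => d i < 0)
  have hle := Fintype.card_subtype_le (fun i => d i < 0)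
  have hU : finrank ℝ (vanishingOn fun i => ¬ d i < 0) = Fintype.card {i // d i < 0} := by
    rw [finrank_vanishingOn, hcard]; omega
  rw [← hU]
  refine negIdx_eq_finrank _ (vanishingOn fun i => d i < 0) (fun x hx hx0 => ?_) (fun x hx => ?_) ?_
  · rw [mem_vanishingOn] at hx
    obtain ⟨j, hj⟩ : ∃ j, x j ≠ 0 := by
      by_contra! h
      exact hx0 (PiLp.ext h)
    have hdj : d j < 0 := not_not.1 fun h => hj (hx j h)
    rw [inner_toEuclideanLin_diagonal,
      ← Finset.sum_const_zero (s := (Finset.univ : Finset ι)) (M := ℝ)]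
    refine Finset.sum_lt_sum (fun i _ => ?_) ⟨j, Finset.mem_univ _, ?_⟩
    · by_cases hi : d i < 0
      · nlinarith [mul_self_nonneg (x i)]
      · simp [hx i hi]
    · nlinarith [mul_self_pos.2 hj]
  · rw [mem_vanishingOn] at hx
    rw [inner_toEuclideanLin_diagonal]
    refine Finset.sum_nonneg fun i _ => ?_
    by_cases hi : d i < 0
    · simp [hx i hi]
    · nlinarith [mul_self_nonneg (x i)]
  · rw [hU, finrank_vanishingOn, finrank_euclideanSpace]; omega

end DiagonalIndex

section Counterexample

variable {n : ℕ} {a : ℝ}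

lemma abs_dvec (i : Fin n) : |dvec n a i| = |a| := by
  unfold dvec; split_ifs <;> simp

lemma card_val_lt_two (hn : 2 ≤ n) : Fintype.card {i : Fin n // (i : ℕ) < 2} = 2 := by
  rw [Fintype.card_subtype, Fin.card_filter_val_lt, min_eq_right hn]

lemma sum_dvec (hn : 2 ≤ n) : ∑ i, dvec n a i = (4 - n) * a := by
  have hlow : (Finset.univ.filter fun i : Fin n => (i : ℕ) < 2).card = 2 := by
    rw [Fin.card_filter_val_lt, min_eq_right hn]
  have hhigh := Finset.card_filter_add_card_filter_not (s := Finset.univ)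
    (fun i : Fin n => (i : ℕ) < 2)
  rw [hlow, Finset.card_univ, Fintype.card_fin] at hhigh
  simp only [dvec, Finset.sum_ite, Finset.sum_const, hlow, nsmul_eq_mul]
  rw [show (Finset.univ.filter fun i : Fin n => ¬ (i : ℕ) < 2).card = n - 2 by omega,
    Nat.cast_sub hn]
  ring

lemma βex_eq_inner_smul :
    βex n a = fun x y => ⟪toEuclideanLin (diagonal (dvec n a)) x, y⟫ •
      EuclideanSpace.single (0 : Fin 2) (1 : ℝ) := by
  simp_rw [inner_toEuclideanLin_diagonal]; rfl

lemma bnormSq_βex : bnormSq (βex n a) = n * a ^ 2 := by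
  rw [βex_eq_inner_smul, bnormSq_inner_smul (norm_toEuclideanLin_diagonal (abs_nonneg a) abs_dvec)]
  simp

lemma norm_btrace_βex_sq (hn : 2 ≤ n) : ‖btrace (βex n a)‖ ^ 2 = ((n : ℝ) - 4) ^ 2 * a ^ 2 := by
  rw [βex_eq_inner_smul, btrace_inner_smul, trace_toEuclideanLin_diagonal, sum_dvec hn,
    norm_smul]
  simp only [PiLp.norm_single, norm_one, mul_one, Real.norm_eq_abs, sq_abs]
  ring

lemma bnormSq_βex_sub_le_zero (hn : 5 ≤ n) {lam : ℝ} (hlam : (n : ℝ) / ((n : ℝ) - 4) ^ 2 ≤ lam) :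
    bnormSq (βex n a) - lam * ‖btrace (βex n a)‖ ^ 2 ≤ 0 := by
  have hn' : (5 : ℝ) ≤ n := by exact_mod_cast hn
  rw [bnormSq_βex, norm_btrace_βex_sq (by omega), ← mul_assoc, sub_nonpos]
  exact mul_le_mul_of_nonneg_right ((div_le_iff₀ (by nlinarith)).1 hlam) (sq_nonneg a)

lemma eq_toEuclideanLin_diagonal_of_inner_eq
    {T : EuclideanSpace ℝ (Fin 2) → EuclideanSpace ℝ (Fin n) →ₗ[ℝ] EuclideanSpace ℝ (Fin n)}
    (hT : ∀ u x y, ⟪T u x, y⟫ = ⟪βex n a x y, u⟫) (u : EuclideanSpace ℝ (Fin 2)) :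
    T u = toEuclideanLin (diagonal (u 0 • dvec n a)) := by
  ext1 x
  refine ext_inner_right ℝ fun y => ?_
  rw [hT, βex_eq_inner_smul, real_inner_smul_left, EuclideanSpace.inner_single_left,
    inner_toEuclideanLin_diagonal, inner_toEuclideanLin_diagonal, Finset.sum_mul]
  simp only [Pi.smul_apply, smul_eq_mul, map_one, one_mul]
  exact Finset.sum_congr rfl fun i _ => by ring

lemma card_smul_dvec_neg (hn : 2 ≤ n) (ha : 0 < a) (c : ℝ) :
    Fintype.card {i // (c • dvec n a) i < 0} = if 0 < c then n - 2 else if c < 0 then 2 else 0 := by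
  rcases lt_trichotomy c 0 with hc | rfl | hc
  · have hiff : ∀ i : Fin n, (c • dvec n a) i < 0 ↔ (i : ℕ) < 2 := fun i => by
      by_cases hi : (i : ℕ) < 2 <;> simp [dvec, hi, mul_neg_iff, hc, ha, hc.not_gt, ha.not_gt]
    rw [if_neg hc.not_gt, if_pos hc, Fintype.card_congr (Equiv.subtypeEquivRight hiff),
      card_val_lt_two hn]
  · simp
  · have hiff : ∀ i : Fin n, (c • dvec n a) i < 0 ↔ ¬ (i : ℕ) < 2 := fun i => by
      by_cases hi : (i : ℕ) < 2 <;> simp [dvec, hi, mul_neg_iff, hc, ha, hc.not_gt, ha.not_gt]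
    rw [if_pos hc, Fintype.card_congr (Equiv.subtypeEquivRight hiff), Fintype.card_subtype_compl,
      card_val_lt_two hn, Fintype.card_fin]

lemma two_le_negIdx_and_negIdx_le_iff (hn : 4 ≤ n) (ha : 0 < a) (c : ℝ) :
    (2 ≤ negIdx (toEuclideanLin (diagonal (c • dvec n a))) ∧
      negIdx (toEuclideanLin (diagonal (c • dvec n a))) ≤ n - 2) ↔ c ≠ 0 := by
  rw [negIdx_toEuclideanLin_diagonal, card_smul_dvec_neg (by omega) ha]
  rcases lt_trichotomy c 0 with hc | rfl | hc
  · simp [hc, hc.not_gt, hc.ne]; omega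
  · simp
  · simp [hc, hc.ne']; omega

lemma abs_det_smul_dvec (c : ℝ) :
    |LinearMap.det (toEuclideanLin (diagonal (c • dvec n a)))| = (|c| * |a|) ^ n := by
  rw [det_toEuclideanLin_diagonal, Finset.abs_prod]
  simp [abs_mul, abs_dvec, mul_pow]

end Counterexample

lemma coord_zero_eq_zero_iff {u : EuclideanSpace ℝ (Fin 2)} (hu : ‖u‖ = 1) :
    u 0 = 0 ↔ u = EuclideanSpace.single 1 1 ∨ u = -EuclideanSpace.single 1 1 := by
  have hsq : u 0 ^ 2 + u 1 ^ 2 = 1 := by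
    rw [← EuclideanSpace.real_norm_sq_eq u |>.trans (Fin.sum_univ_two _), hu, one_pow]
  constructor
  · intro h0
    rw [h0, zero_pow two_ne_zero, zero_add, sq_eq_one_iff] at hsq
    rcases hsq with h1 | h1
    · left; ext j; fin_cases j <;> simp [h0, h1]
    · right; ext j; fin_cases j <;> simp [h0, h1]
  · rintro (rfl | rfl) <;> simp

lemma setIntegral_sphere_coord_ne_zero_pos {ι : Type*} [Fintype ι] [DecidableEq ι] (i : ι)
    {c : ℝ} (hc : 0 < c) {k : ℕ} (hk : k ≠ 0) :
    0 < ∫ u in {u : sphere (0 : EuclideanSpace ℝ ι) 1 | (u : EuclideanSpace ℝ ι) i ≠ 0},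
      (|(u : EuclideanSpace ℝ ι) i| * c) ^ k ∂volume.toSphere := by
  have hcont : Continuous fun u : sphere (0 : EuclideanSpace ℝ ι) 1 =>
      (|(u : EuclideanSpace ℝ ι) i| * c) ^ k := by fun_prop
  rw [setIntegral_eq_integral_of_forall_compl_eq_zero fun u hu => by simp_all]
  exact integral_pos_of_integrable_nonneg_nonzero (x := ⟨EuclideanSpace.single i 1, by simp⟩)
    hcont (hcont.integrable_of_hasCompactSupport (HasCompactSupport.of_compactSpace _))
    (fun u => by positivity) (by simp [hc.ne'])

/-- the counterexample showing the Weyl/curvature term is essential.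
Let `n ≥ 7`, `V = ℝⁿ`, `W = ℝ²`, `a > 0` and `β(x,y) = ⟨Ax,y⟩ ξ₁` with
`A = diag(a,a,−a,…,−a)`. Then (i) for every `λ ∈ [n/(n−4)², 1)` one has
`‖β‖² − λ|trace β|² ≤ 0`, hence `(‖β‖² − λ|trace β|²)₊ = 0`; (ii)
`Φ(β) = S¹ ∖ {±ξ₂}`; (iii) `∫_{Φ(β)} |det β^♯(u)| dS_u > 0`. In particular, the inequality
`((‖β‖² − λ|trace β|²)₊)² ≥ ε (∫_{Φ(β)} |det β^♯(u)| dS_u)^{4/n}` fails for every `ε > 0`. -/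
theorem stmt10 (n : ℕ) (hn : 7 ≤ n) (a : ℝ) (ha : 0 < a)
    (T : EuclideanSpace ℝ (Fin 2) →
        (EuclideanSpace ℝ (Fin n) →ₗ[ℝ] EuclideanSpace ℝ (Fin n)))
    (hT : ∀ u x y, ⟪T u x, y⟫ = ⟪βex n a x y, u⟫) :
    -- (i)
    (∀ lam : ℝ, (n : ℝ) / ((n : ℝ) - 4) ^ 2 ≤ lam → lam < 1 →
      bnormSq (βex n a) - lam * ‖btrace (βex n a)‖ ^ 2 ≤ 0 ∧
        max (bnormSq (βex n a) - lam * ‖btrace (βex n a)‖ ^ 2) 0 = 0) ∧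
    -- (ii) `Φ(β) = S¹ ∖ {ξ₂, −ξ₂}`
    ({u : Metric.sphere (0 : EuclideanSpace ℝ (Fin 2)) 1 |
        2 ≤ negIdx (T ↑u) ∧ negIdx (T ↑u) ≤ n - 2} =
      {u : Metric.sphere (0 : EuclideanSpace ℝ (Fin 2)) 1 |
        (u : EuclideanSpace ℝ (Fin 2)) ≠ EuclideanSpace.single (1 : Fin 2) (1 : ℝ) ∧
        (u : EuclideanSpace ℝ (Fin 2)) ≠ -EuclideanSpace.single (1 : Fin 2) (1 : ℝ)}) ∧
    -- (iii)
    (0 < ∫ u in {u : Metric.sphere (0 : EuclideanSpace ℝ (Fin 2)) 1 |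
          2 ≤ negIdx (T ↑u) ∧ negIdx (T ↑u) ≤ n - 2},
        |LinearMap.det (T ↑u)| ∂(volume.toSphere)) ∧
    -- the pinching inequality fails for every `ε > 0`
    (∀ ε : ℝ, 0 < ε → ∀ lam : ℝ, (n : ℝ) / ((n : ℝ) - 4) ^ 2 ≤ lam → lam < 1 →
      ¬ (ε * (∫ u in {u : Metric.sphere (0 : EuclideanSpace ℝ (Fin 2)) 1 |
              2 ≤ negIdx (T ↑u) ∧ negIdx (T ↑u) ≤ n - 2},
            |LinearMap.det (T ↑u)| ∂(volume.toSphere)) ^ ((4 : ℝ) / n) ≤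
          (max (bnormSq (βex n a) - lam * ‖btrace (βex n a)‖ ^ 2) 0) ^ 2)) := by
  have hTu := eq_toEuclideanLin_diagonal_of_inner_eq hT
  have hΦ : {u : Metric.sphere (0 : EuclideanSpace ℝ (Fin 2)) 1 |
      2 ≤ negIdx (T ↑u) ∧ negIdx (T ↑u) ≤ n - 2} =
      {u : Metric.sphere (0 : EuclideanSpace ℝ (Fin 2)) 1 | (u : EuclideanSpace ℝ (Fin 2)) 0 ≠ 0} :=
    Set.ext fun u => by
      rw [Set.mem_ofPred_eq, Set.mem_ofPred_eq, hTu]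
      exact two_le_negIdx_and_negIdx_le_iff (by omega) ha _
  have hi : ∀ lam : ℝ, (n : ℝ) / ((n : ℝ) - 4) ^ 2 ≤ lam → lam < 1 →
      bnormSq (βex n a) - lam * ‖btrace (βex n a)‖ ^ 2 ≤ 0 ∧
        max (bnormSq (βex n a) - lam * ‖btrace (βex n a)‖ ^ 2) 0 = 0 := fun lam hlam _ =>
    have h := bnormSq_βex_sub_le_zero (by omega) hlam
    ⟨h, max_eq_right h⟩
  have hiii : 0 < ∫ u in {u : Metric.sphere (0 : EuclideanSpace ℝ (Fin 2)) 1 |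
      2 ≤ negIdx (T ↑u) ∧ negIdx (T ↑u) ≤ n - 2}, |LinearMap.det (T ↑u)| ∂(volume.toSphere) := by
    simp_rw [hΦ, hTu, abs_det_smul_dvec]
    exact setIntegral_sphere_coord_ne_zero_pos 0 (abs_pos.2 ha.ne') (by omega)
  refine ⟨hi, hΦ.trans (Set.ext fun u => ?_), hiii, fun ε hε lam hlam hlam1 hle => ?_⟩
  · simp [coord_zero_eq_zero_iff (norm_eq_of_mem_sphere u)]
  · rw [(hi lam hlam hlam1).2, zero_pow two_ne_zero] at hle
    exact hle.not_gt (mul_pos hε (Real.rpow_pos_of_pos hiii _))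
end
end
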